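/- For every index 1 ≤ i ≤ ℓ, the difference operators F_i(u) and F_i(v) satisfy the Yangian same-node lowering relation: (u − v)·(F_i(u)∘F_i(v) − F_i(v)∘F_i(u)) = iħ·d_i·(F_i(u) − F_i(v))∘(F_i(u) − F_i(v)), as an identity of ℂ(u,v)-linear endomorphisms of F. -/
import Mathlib


open MvPolynomial Complex Finset

noncomputable section

/-- Variables: the spectral variables (indexed by `Fin 2`) and the `γ_{i,k}`. -/
abbrev Var (ℓ : ℕ) (m : Fin ℓ → ℕ) := Fin 2 ⊕ ((i : Fin ℓ) × Fin (m i))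

/-- The field of rational functions over `ℂ` in the spectral variables and the `γ_{i,k}`. -/
abbrev FF (ℓ : ℕ) (m : Fin ℓ → ℕ) := FractionRing (MvPolynomial (Var ℓ m) ℂ)

variable (ℓ : ℕ) (m : Fin ℓ → ℕ)

/-- The embedding of constants `ℂ → F`. -/
def cstHom : ℂ →+* FF ℓ m :=
  (algebraMap (MvPolynomial (Var ℓ m) ℂ) (FF ℓ m)).comp (C : ℂ →+* MvPolynomial (Var ℓ m) ℂ)

def cst (c : ℂ) : FF ℓ m := cstHom ℓ m c

/-- The variable `γ_{i,k}` as an element of `F`. -/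
def gam (i : Fin ℓ) (k : Fin (m i)) : FF ℓ m :=
  algebraMap (MvPolynomial (Var ℓ m) ℂ) (FF ℓ m) (X (Sum.inr ⟨i, k⟩))

/-- The spectral variables. -/
def spec (t : Fin 2) : FF ℓ m :=
  algebraMap (MvPolynomial (Var ℓ m) ℂ) (FF ℓ m) (X (Sum.inl t))

/-- The algebra automorphism of the polynomial ring shifting the variable `w` by `c`
and fixing all other variables. -/
def shiftPoly (c : ℂ) (w : Var ℓ m) :
    MvPolynomial (Var ℓ m) ℂ ≃ₐ[ℂ] MvPolynomial (Var ℓ m) ℂ :=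
  AlgEquiv.ofAlgHom
    (aeval (fun j => if j = w then X j + MvPolynomial.C c else X j))
    (aeval (fun j => if j = w then X j - MvPolynomial.C c else X j))
    (by apply MvPolynomial.algHom_ext; intro j; by_cases h : j = w <;> simp [h])
    (by apply MvPolynomial.algHom_ext; intro j; by_cases h : j = w <;> simp [h])

/-- The induced automorphism of the field of rational functions. -/
def shiftField (c : ℂ) (w : Var ℓ m) : FF ℓ m ≃+* FF ℓ m :=
  IsFractionRing.ringEquivOfRingEquiv (shiftPoly ℓ m c w).toRingEquiv

variable (a : Fin ℓ → Fin ℓ → ℤ) (d : Fin ℓ → ℕ) (hb : ℂ)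

/-- `β_{i,k}` : the automorphism `γ_{i,k} ↦ γ_{i,k} + iħ·d_i`. -/
def beta (i : Fin ℓ) (k : Fin (m i)) : FF ℓ m ≃+* FF ℓ m :=
  shiftField ℓ m (I * hb * (d i : ℂ)) (Sum.inr ⟨i, k⟩)

/-- The constant `(iħ/2)·(d_i·a_{ij} + 2r·d_j)`, where `r` is offset by one
(so that `r` ranges over `0, …, −a_{ji} − 1` in `Finset.range`). -/
def cf (i j : Fin ℓ) (r : ℕ) : ℂ :=
  (I * hb / 2) * ((d i : ℂ) * (a i j : ℂ) + 2 * ((r : ℂ) + 1) * (d j : ℂ))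

variable (l : Fin ℓ → ℕ) (ν : (i : Fin ℓ) → Fin (l i) → ℂ)

/-- `R_i(x) = Π_{t=1}^{l_i} (x − ν_{i,t})`, evaluated at `x ∈ F`. -/
def Rv (i : Fin ℓ) (x : FF ℓ m) : FF ℓ m :=
  ∏ t : Fin (l i), (x - cst ℓ m (ν i t))

/-- The operator `F_i(w)`. -/
def Fop (i : Fin ℓ) (w : FF ℓ m) : FF ℓ m → FF ℓ m := fun f =>
  cst ℓ m (-((d i : ℂ) ^ (-(1/2 : ℂ)))) *
    ∑ k : Fin (m i),
      (Rv ℓ m l ν i (gam ℓ m i k + cst ℓ m (I * hb * (d i : ℂ))) *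
        (∏ j ∈ univ.filter (fun j => j < i), ∏ r ∈ range (-(a j i)).toNat, ∏ p : Fin (m j),
          (gam ℓ m i k - gam ℓ m j p - cst ℓ m (cf ℓ a d hb i j r)
            + cst ℓ m (I * hb * (d i : ℂ)))) /
        ((w - gam ℓ m i k - cst ℓ m (I * hb * (d i : ℂ))) *
          ∏ p ∈ univ.erase k, (gam ℓ m i k - gam ℓ m i p))) *
      (beta ℓ m d hb i k) f


/-! ### Auxiliary lemmas -/

section Aux

variable {ℓ : ℕ} {m : Fin ℓ → ℕ}

lemma Ycst_eq (c : ℂ) : cst ℓ m c = algebraMap (MvPolynomial (Var ℓ m) ℂ) (FF ℓ m) (C c) := rfl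

lemma YalgebraMap_ne_zero {p : MvPolynomial (Var ℓ m) ℂ} (hp : p ≠ 0) :
    algebraMap (MvPolynomial (Var ℓ m) ℂ) (FF ℓ m) p ≠ 0 := fun h =>
  hp (IsFractionRing.injective (MvPolynomial (Var ℓ m) ℂ) (FF ℓ m) (by rw [h, map_zero]))

lemma YXXC_ne (s t : Var ℓ m) (hst : s ≠ t) (c : ℂ) :
    (X s - X t - C c : MvPolynomial (Var ℓ m) ℂ) ≠ 0 := by
  intro h0
  have h1 := congrArg (eval (fun j => if j = s then c + 1 else 0)) h0
  rw [map_sub, map_sub, eval_X, eval_X, eval_C, map_zero, if_pos rfl,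
    if_neg (Ne.symm hst)] at h1
  have h2 : (1 : ℂ) = 0 := by linear_combination h1
  exact one_ne_zero h2

lemma Yspec_sub_gam (t : Fin 2) (i : Fin ℓ) (k : Fin (m i)) (c : ℂ) :
    spec ℓ m t - gam ℓ m i k - cst ℓ m c
      = algebraMap (MvPolynomial (Var ℓ m) ℂ) (FF ℓ m)
          (X (Sum.inl t) - X (Sum.inr ⟨i, k⟩) - C c) := by
  rw [map_sub, map_sub]; rfl

lemma Yspec_sub_gam_ne (t : Fin 2) (i : Fin ℓ) (k : Fin (m i)) (c : ℂ) :
    spec ℓ m t - gam ℓ m i k - cst ℓ m c ≠ 0 := by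
  rw [Yspec_sub_gam]
  exact YalgebraMap_ne_zero (YXXC_ne _ _ (by simp) c)

lemma Ygam_sub_gam (i : Fin ℓ) (k p : Fin (m i)) (c : ℂ) :
    gam ℓ m i k - gam ℓ m i p - cst ℓ m c
      = algebraMap (MvPolynomial (Var ℓ m) ℂ) (FF ℓ m)
          (X (Sum.inr ⟨i, k⟩) - X (Sum.inr ⟨i, p⟩) - C c) := by
  rw [map_sub, map_sub]; rfl

lemma Yinr_ne (i : Fin ℓ) (k p : Fin (m i)) (hkp : k ≠ p) :
    (Sum.inr ⟨i, k⟩ : Var ℓ m) ≠ Sum.inr ⟨i, p⟩ := by simp [hkp]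

lemma Ygam_sub_gam_ne (i : Fin ℓ) (k p : Fin (m i)) (hkp : k ≠ p) (c : ℂ) :
    gam ℓ m i k - gam ℓ m i p - cst ℓ m c ≠ 0 := by
  rw [Ygam_sub_gam]
  exact YalgebraMap_ne_zero (YXXC_ne _ _ (Yinr_ne i k p hkp) c)

lemma Ygam_sub_gam_ne' (i : Fin ℓ) (k p : Fin (m i)) (hkp : k ≠ p) :
    gam ℓ m i k - gam ℓ m i p ≠ 0 := by
  have h := Ygam_sub_gam_ne i k p hkp 0
  have h0 : cst ℓ m (0 : ℂ) = 0 := map_zero (cstHom ℓ m)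
  rw [h0, sub_zero] at h
  exact h

lemma YshiftPoly_X (c : ℂ) (w j : Var ℓ m) :
    shiftPoly ℓ m c w (X j) = if j = w then X j + C c else X j := by
  simp [shiftPoly]

lemma YshiftPoly_C (c : ℂ) (w : Var ℓ m) (c' : ℂ) :
    shiftPoly ℓ m c w (C c') = C c' := by
  simp [shiftPoly]

lemma YshiftField_algebraMap (c : ℂ) (w : Var ℓ m) (p : MvPolynomial (Var ℓ m) ℂ) :
    shiftField ℓ m c w (algebraMap (MvPolynomial (Var ℓ m) ℂ) (FF ℓ m) p)
      = algebraMap (MvPolynomial (Var ℓ m) ℂ) (FF ℓ m) (shiftPoly ℓ m c w p) := by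
  simp [shiftField]

variable {d : Fin ℓ → ℕ} {hb : ℂ}

lemma Ybeta_cst (i : Fin ℓ) (k : Fin (m i)) (c : ℂ) :
    beta ℓ m d hb i k (cst ℓ m c) = cst ℓ m c := by
  rw [Ycst_eq, beta, YshiftField_algebraMap, YshiftPoly_C]

lemma Ybeta_spec (i : Fin ℓ) (k : Fin (m i)) (t : Fin 2) :
    beta ℓ m d hb i k (spec ℓ m t) = spec ℓ m t := by
  rw [spec, beta, YshiftField_algebraMap, YshiftPoly_X, if_neg (by simp)]

lemma Ybeta_gam_self (i : Fin ℓ) (k : Fin (m i)) :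
    beta ℓ m d hb i k (gam ℓ m i k)
      = gam ℓ m i k + cst ℓ m (I * hb * (d i : ℂ)) := by
  rw [gam, beta, YshiftField_algebraMap, YshiftPoly_X, if_pos rfl]
  exact map_add (algebraMap (MvPolynomial (Var ℓ m) ℂ) (FF ℓ m)) _ _

lemma Ybeta_gam_ne (i : Fin ℓ) (k : Fin (m i)) (j : Fin ℓ) (p : Fin (m j))
    (h : (Sum.inr ⟨j, p⟩ : Var ℓ m) ≠ Sum.inr ⟨i, k⟩) :
    beta ℓ m d hb i k (gam ℓ m j p) = gam ℓ m j p := by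
  rw [gam, beta, YshiftField_algebraMap, YshiftPoly_X, if_neg h]

lemma YshiftPoly_comm (c c' : ℂ) (w w' : Var ℓ m) (p : MvPolynomial (Var ℓ m) ℂ) :
    shiftPoly ℓ m c w (shiftPoly ℓ m c' w' p)
      = shiftPoly ℓ m c' w' (shiftPoly ℓ m c w p) := by
  have h : ((shiftPoly ℓ m c w).toAlgHom.comp (shiftPoly ℓ m c' w').toAlgHom)
      = ((shiftPoly ℓ m c' w').toAlgHom.comp (shiftPoly ℓ m c w).toAlgHom) := by
    apply MvPolynomial.algHom_ext
    intro j
    simp only [AlgHom.coe_comp, Function.comp_apply, AlgEquiv.toAlgHom_eq_coe,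
      AlgHom.coe_coe]
    by_cases h1 : j = w'
    · subst h1
      by_cases h2 : j = w
      · subst h2
        simp [YshiftPoly_X, YshiftPoly_C, map_add]
        ring
      · simp [YshiftPoly_X, YshiftPoly_C, map_add, h2]
    · by_cases h2 : j = w
      · subst h2
        simp [YshiftPoly_X, YshiftPoly_C, map_add, h1]
      · simp [YshiftPoly_X, YshiftPoly_C, h1, h2]
  exact DFunLike.congr_fun h p

lemma Ybeta_comm (i : Fin ℓ) (k k' : Fin (m i)) (f : FF ℓ m) :
    beta ℓ m d hb i k (beta ℓ m d hb i k' f) = beta ℓ m d hb i k' (beta ℓ m d hb i k f) := by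
  have h : ((beta ℓ m d hb i k : FF ℓ m →+* FF ℓ m).comp
        (beta ℓ m d hb i k' : FF ℓ m →+* FF ℓ m))
      = ((beta ℓ m d hb i k' : FF ℓ m →+* FF ℓ m).comp
        (beta ℓ m d hb i k : FF ℓ m →+* FF ℓ m)) := by
    apply IsLocalization.ringHom_ext (nonZeroDivisors (MvPolynomial (Var ℓ m) ℂ))
    refine RingHom.ext fun p => ?_
    simp only [RingHom.coe_comp, Function.comp_apply, RingHom.coe_coe, beta]
    rw [YshiftField_algebraMap, YshiftField_algebraMap, YshiftField_algebraMap,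
      YshiftField_algebraMap, YshiftPoly_comm]
  exact DFunLike.congr_fun h f

lemma Ybeta_ne_zero (i : Fin ℓ) (k : Fin (m i)) {x : FF ℓ m} (hx : x ≠ 0) :
    beta ℓ m d hb i k x ≠ 0 := fun h =>
  hx ((beta ℓ m d hb i k).injective (by rw [h, map_zero]))

end Aux

/-! ### Coefficient functions and their transformation under `beta` -/

section Coef

variable (ℓ : ℕ) (m : Fin ℓ → ℕ) (a : Fin ℓ → Fin ℓ → ℤ) (d : Fin ℓ → ℕ) (hb : ℂ)
  (l : Fin ℓ → ℕ) (ν : (i : Fin ℓ) → Fin (l i) → ℂ)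

/-- The numerator of the coefficient of `β_{i,k}` in `F_i(w)`. -/
def NumF (i : Fin ℓ) (k : Fin (m i)) : FF ℓ m :=
  Rv ℓ m l ν i (gam ℓ m i k + cst ℓ m (I * hb * (d i : ℂ))) *
    (∏ j ∈ univ.filter (fun j => j < i), ∏ r ∈ range (-(a j i)).toNat, ∏ p : Fin (m j),
      (gam ℓ m i k - gam ℓ m j p - cst ℓ m (cf ℓ a d hb i j r)
        + cst ℓ m (I * hb * (d i : ℂ))))

/-- The denominator product of the coefficient of `β_{i,k}` in `F_i(w)`. -/
def DenF (i : Fin ℓ) (k : Fin (m i)) : FF ℓ m :=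
  ∏ p ∈ univ.erase k, (gam ℓ m i k - gam ℓ m i p)

/-- The coefficient of `β_{i,k}` in `F_i(w)`. -/
def AC (i : Fin ℓ) (k : Fin (m i)) (w : FF ℓ m) : FF ℓ m :=
  NumF ℓ m a d hb l ν i k /
    ((w - gam ℓ m i k - cst ℓ m (I * hb * (d i : ℂ))) * DenF ℓ m i k)

lemma Fop_eq (i : Fin ℓ) (w : FF ℓ m) (f : FF ℓ m) :
    Fop ℓ m a d hb l ν i w f
      = cst ℓ m (-((d i : ℂ) ^ (-(1/2 : ℂ)))) *
          ∑ k : Fin (m i), AC ℓ m a d hb l ν i k w * beta ℓ m d hb i k f := rfl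

variable {ℓ m}

lemma YDenF_ne_zero (i : Fin ℓ) (k : Fin (m i)) : DenF ℓ m i k ≠ 0 := by
  rw [DenF]
  refine Finset.prod_ne_zero_iff.mpr fun p hp => ?_
  exact Ygam_sub_gam_ne' i k p (Ne.symm (Finset.ne_of_mem_erase hp))

lemma YD2_ne_zero (i : Fin ℓ) (k k' : Fin (m i)) :
    (∏ p ∈ (univ.erase k).erase k', (gam ℓ m i k - gam ℓ m i p)) ≠ 0 := by
  refine Finset.prod_ne_zero_iff.mpr fun p hp => ?_
  exact Ygam_sub_gam_ne' i k p
    (Ne.symm (Finset.ne_of_mem_erase (Finset.mem_of_mem_erase hp)))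

lemma YDenF_split (i : Fin ℓ) (k k' : Fin (m i)) (hne : k' ≠ k) :
    DenF ℓ m i k = (gam ℓ m i k - gam ℓ m i k') *
      ∏ p ∈ (univ.erase k).erase k', (gam ℓ m i k - gam ℓ m i p) := by
  rw [DenF]
  exact (Finset.mul_prod_erase (univ.erase k) _
    (Finset.mem_erase.mpr ⟨hne, Finset.mem_univ k'⟩)).symm

variable {a d hb l ν}

lemma Ybeta_NumF (i : Fin ℓ) (k k' : Fin (m i)) (hne : k' ≠ k) :
    beta ℓ m d hb i k (NumF ℓ m a d hb l ν i k') = NumF ℓ m a d hb l ν i k' := by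
  rw [NumF, map_mul]
  congr 1
  · rw [Rv, map_prod]
    refine Finset.prod_congr rfl fun t _ => ?_
    rw [map_sub, map_add, Ybeta_cst, Ybeta_cst, Ybeta_gam_ne i k i k' (Yinr_ne i k' k hne)]
  · rw [map_prod]
    refine Finset.prod_congr rfl fun j hj => ?_
    have hji : j ≠ i := Fin.ne_of_lt (Finset.mem_filter.mp hj).2
    rw [map_prod]
    refine Finset.prod_congr rfl fun r _ => ?_
    rw [map_prod]
    refine Finset.prod_congr rfl fun p _ => ?_
    rw [map_add, map_sub, map_sub, Ybeta_cst, Ybeta_cst,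
      Ybeta_gam_ne i k i k' (Yinr_ne i k' k hne),
      Ybeta_gam_ne i k j p (by simp [hji])]

lemma Ybeta_DenF (i : Fin ℓ) (k k' : Fin (m i)) (hne : k' ≠ k) :
    beta ℓ m d hb i k (DenF ℓ m i k')
      = (gam ℓ m i k' - gam ℓ m i k - cst ℓ m (I * hb * (d i : ℂ))) *
          ∏ p ∈ (univ.erase k').erase k, (gam ℓ m i k' - gam ℓ m i p) := by
  rw [YDenF_split i k' k (Ne.symm hne), map_mul, map_prod]
  congr 1
  · rw [map_sub, Ybeta_gam_ne i k i k' (Yinr_ne i k' k hne), Ybeta_gam_self]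
    ring
  · refine Finset.prod_congr rfl fun p hp => ?_
    have hpk : p ≠ k := Finset.ne_of_mem_erase hp
    rw [map_sub, Ybeta_gam_ne i k i k' (Yinr_ne i k' k hne),
      Ybeta_gam_ne i k i p (Yinr_ne i p k hpk)]

lemma Ybeta_AC_ne (i : Fin ℓ) (k k' : Fin (m i)) (hne : k' ≠ k) (t : Fin 2) :
    beta ℓ m d hb i k (AC ℓ m a d hb l ν i k' (spec ℓ m t))
      = NumF ℓ m a d hb l ν i k' /
          ((spec ℓ m t - gam ℓ m i k' - cst ℓ m (I * hb * (d i : ℂ))) *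
            ((gam ℓ m i k' - gam ℓ m i k - cst ℓ m (I * hb * (d i : ℂ))) *
              ∏ p ∈ (univ.erase k').erase k, (gam ℓ m i k' - gam ℓ m i p))) := by
  rw [AC, map_div₀, map_mul, map_sub, map_sub, Ybeta_spec, Ybeta_cst,
    Ybeta_gam_ne i k i k' (Yinr_ne i k' k hne), Ybeta_NumF i k k' hne,
    Ybeta_DenF i k k' hne]

lemma Ybeta_AC_self (i : Fin ℓ) (k : Fin (m i)) (t : Fin 2) :
    beta ℓ m d hb i k (AC ℓ m a d hb l ν i k (spec ℓ m t))
      = beta ℓ m d hb i k (NumF ℓ m a d hb l ν i k) /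
          ((spec ℓ m t - (gam ℓ m i k + cst ℓ m (I * hb * (d i : ℂ)))
              - cst ℓ m (I * hb * (d i : ℂ))) *
            beta ℓ m d hb i k (DenF ℓ m i k)) := by
  rw [AC, map_div₀, map_mul, map_sub, map_sub, Ybeta_spec, Ybeta_cst, Ybeta_gam_self]

lemma Yspec_sub_gam_shift_ne (t : Fin 2) (i : Fin ℓ) (k : Fin (m i)) :
    spec ℓ m t - (gam ℓ m i k + cst ℓ m (I * hb * (d i : ℂ)))
        - cst ℓ m (I * hb * (d i : ℂ)) ≠ 0 := by
  have h := Yspec_sub_gam_ne t i k (I * hb * (d i : ℂ) + I * hb * (d i : ℂ))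
  intro h0
  apply h
  rw [show cst ℓ m (I * hb * (d i : ℂ) + I * hb * (d i : ℂ))
      = cst ℓ m (I * hb * (d i : ℂ)) + cst ℓ m (I * hb * (d i : ℂ)) from
    map_add (cstHom ℓ m) _ _]
  linear_combination h0

end Coef

/-! ### Expansion of compositions, and the double-sum antisymmetry trick -/

section Expand

variable {ℓ : ℕ} {m : Fin ℓ → ℕ} {a : Fin ℓ → Fin ℓ → ℤ} {d : Fin ℓ → ℕ} {hb : ℂ}
  {l : Fin ℓ → ℕ} {ν : (i : Fin ℓ) → Fin (l i) → ℂ}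

lemma YFop_sub (i : Fin ℓ) (w : FF ℓ m) (p q : FF ℓ m) :
    Fop ℓ m a d hb l ν i w (p - q)
      = Fop ℓ m a d hb l ν i w p - Fop ℓ m a d hb l ν i w q := by
  simp only [Fop_eq, map_sub, mul_sub, Finset.sum_sub_distrib]

lemma Yexp1 (i : Fin ℓ) (w w' : FF ℓ m) (f : FF ℓ m) :
    Fop ℓ m a d hb l ν i w' (Fop ℓ m a d hb l ν i w f)
      = cst ℓ m (-((d i : ℂ) ^ (-(1/2 : ℂ)))) * cst ℓ m (-((d i : ℂ) ^ (-(1/2 : ℂ)))) *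
          ∑ k : Fin (m i), ∑ k' : Fin (m i),
            (AC ℓ m a d hb l ν i k w' * beta ℓ m d hb i k (AC ℓ m a d hb l ν i k' w)) *
              beta ℓ m d hb i k (beta ℓ m d hb i k' f) := by
  rw [Fop_eq, Fop_eq]
  simp only [map_mul, map_sum, Ybeta_cst, Finset.mul_sum]
  exact Finset.sum_congr rfl fun k _ => Finset.sum_congr rfl fun k' _ => by ring

lemma Ydouble_sum_eq_zero {K : Type*} [Field K] [CharZero K] {n : ℕ}
    (T : Fin n → Fin n → K) (h : ∀ k k', T k k' + T k' k = 0) :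
    ∑ k : Fin n, ∑ k' : Fin n, T k k' = 0 := by
  have h2 : (∑ k : Fin n, ∑ k' : Fin n, T k k') + (∑ k : Fin n, ∑ k' : Fin n, T k k') = 0 := by
    nth_rewrite 1 [Finset.sum_comm (f := fun k k' => T k k')]
    rw [← Finset.sum_add_distrib]
    simp only [← Finset.sum_add_distrib]
    refine Finset.sum_eq_zero fun k _ => Finset.sum_eq_zero fun k' _ => ?_
    exact h k' k
  have h3 : (2 : K) * (∑ k : Fin n, ∑ k' : Fin n, T k k') = 0 := by
    rw [two_mul]; exact h2
  rcases mul_eq_zero.mp h3 with h4 | h4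
  · exact absurd h4 two_ne_zero
  · exact h4

theorem Ybrkt0 {K : Type*} [Field K] (u v x y H B C : K)
    (h1 : u - x - H ≠ 0) (h2 : v - x - H ≠ 0) (h3 : u - y - H ≠ 0) (h4 : v - y - H ≠ 0) :
    (u - v) * (B / (u - x - H) * (C / (v - y - H)) - B / (v - x - H) * (C / (u - y - H)))
      - H * ((B / (u - x - H) - B / (v - x - H)) * (C / (u - y - H) - C / (v - y - H)))
    = B * C * (u - v) ^ 2 * (y - x - H)
        / ((u - x - H) * ((v - x - H) * ((u - y - H) * (v - y - H)))) := by
  field_simp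
  ring

theorem Ybrkt {K : Type*} [Field K] (u v x y H B C DB DC : K)
    (h1 : u - x - H ≠ 0) (h2 : v - x - H ≠ 0) (h3 : u - y - H ≠ 0) (h4 : v - y - H ≠ 0) :
    (u - v) * (B / ((u - x - H) * DB) * (C / ((v - y - H) * DC))
        - B / ((v - x - H) * DB) * (C / ((u - y - H) * DC)))
      - H * ((B / ((u - x - H) * DB) - B / ((v - x - H) * DB))
          * (C / ((u - y - H) * DC) - C / ((v - y - H) * DC)))
    = B * (1 / DB) * (C * (1 / DC)) * (u - v) ^ 2 * (y - x - H) *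
        (1 / ((u - x - H) * ((v - x - H) * ((u - y - H) * (v - y - H))))) := by
  have e : ∀ (N P D : K), N / (P * D) = N / D / P := fun N P D => by
    rw [div_div, mul_comm]
  have base := Ybrkt0 u v x y H (B / DB) (C / DC) h1 h2 h3 h4
  simp only [e] at base ⊢
  linear_combination base

theorem Ycancel {K : Type*} [Field K] (x y H Nk Nl Dk Dl : K)
    (hxy : x - y ≠ 0) (hyx : y - x ≠ 0) (hxyH : x - y - H ≠ 0) (hyxH : y - x - H ≠ 0)
    (hDk : Dk ≠ 0) (hDl : Dl ≠ 0) :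
    Nk / ((x - y) * Dk) * (Nl / ((y - x - H) * Dl)) * (y - x - H)
      + Nl / ((y - x) * Dl) * (Nk / ((x - y - H) * Dk)) * (x - y - H) = 0 := by
  field_simp
  ring

lemma YFF_charZero : CharZero (FF ℓ m) :=
  charZero_of_injective_algebraMap
    (IsFractionRing.injective (MvPolynomial (Var ℓ m) ℂ) (FF ℓ m))

end Expand

set_option maxHeartbeats 4000000 in
/-- the Yangian same-node lowering relation. -/
theorem yangian_FF_same
    (ℓ : ℕ) (hl : 1 ≤ ℓ)
    (a : Fin ℓ → Fin ℓ → ℤ) (ha : ∀ i, a i i = 2) (ha' : ∀ i j, i ≠ j → a i j ≤ 0)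
    (d : Fin ℓ → ℕ) (hd : ∀ i, 0 < d i)
    (hsym : ∀ i j, (d i : ℤ) * a i j = (d j : ℤ) * a j i)
    (hb : ℂ) (m : Fin ℓ → ℕ) (hm : ∀ i, 0 < m i)
    (l : Fin ℓ → ℕ) (hln : ∀ i, (l i : ℤ) = ∑ j, (m j : ℤ) * a j i)
    (ν : (i : Fin ℓ) → Fin (l i) → ℂ)
    (i : Fin ℓ) :
    (spec ℓ m 0 - spec ℓ m 1) •
        (Fop ℓ m a d hb l ν i (spec ℓ m 0) ∘ Fop ℓ m a d hb l ν i (spec ℓ m 1)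
          - Fop ℓ m a d hb l ν i (spec ℓ m 1) ∘ Fop ℓ m a d hb l ν i (spec ℓ m 0))
      = cst ℓ m ((I * hb) * (d i : ℂ)) •
        ((Fop ℓ m a d hb l ν i (spec ℓ m 0) - Fop ℓ m a d hb l ν i (spec ℓ m 1)) ∘
          (Fop ℓ m a d hb l ν i (spec ℓ m 0) - Fop ℓ m a d hb l ν i (spec ℓ m 1))) := by
  haveI : CharZero (FF ℓ m) := YFF_charZero
  funext f
  simp only [Pi.smul_apply, Pi.sub_apply, Function.comp_apply, smul_eq_mul, YFop_sub]
  rw [Yexp1, Yexp1, Yexp1, Yexp1]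
  have pair : ∀ k k' : Fin (m i),
      ((spec ℓ m 0 - spec ℓ m 1) * (AC ℓ m a d hb l ν i k (spec ℓ m 0) * beta ℓ m d hb i k (AC ℓ m a d hb l ν i k' (spec ℓ m 1)) - AC ℓ m a d hb l ν i k (spec ℓ m 1) * beta ℓ m d hb i k (AC ℓ m a d hb l ν i k' (spec ℓ m 0))) - cst ℓ m (I * hb * (d i : ℂ)) * ((AC ℓ m a d hb l ν i k (spec ℓ m 0) - AC ℓ m a d hb l ν i k (spec ℓ m 1)) * (beta ℓ m d hb i k (AC ℓ m a d hb l ν i k' (spec ℓ m 0)) - beta ℓ m d hb i k (AC ℓ m a d hb l ν i k' (spec ℓ m 1))))) * beta ℓ m d hb i k (beta ℓ m d hb i k' (f))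
      + ((spec ℓ m 0 - spec ℓ m 1) * (AC ℓ m a d hb l ν i k' (spec ℓ m 0) * beta ℓ m d hb i k' (AC ℓ m a d hb l ν i k (spec ℓ m 1)) - AC ℓ m a d hb l ν i k' (spec ℓ m 1) * beta ℓ m d hb i k' (AC ℓ m a d hb l ν i k (spec ℓ m 0))) - cst ℓ m (I * hb * (d i : ℂ)) * ((AC ℓ m a d hb l ν i k' (spec ℓ m 0) - AC ℓ m a d hb l ν i k' (spec ℓ m 1)) * (beta ℓ m d hb i k' (AC ℓ m a d hb l ν i k (spec ℓ m 0)) - beta ℓ m d hb i k' (AC ℓ m a d hb l ν i k (spec ℓ m 1))))) * beta ℓ m d hb i k' (beta ℓ m d hb i k (f)) = 0 := by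
    intro k k'
    by_cases hkk : k = k'
    · obtain rfl := hkk
      rw [Ybeta_AC_self i k 0, Ybeta_AC_self i k 1]
      simp only [AC]
      have K := Ybrkt (spec ℓ m 0) (spec ℓ m 1) (gam ℓ m i k)
        (gam ℓ m i k + cst ℓ m (I * hb * (d i : ℂ))) (cst ℓ m (I * hb * (d i : ℂ)))
        (NumF ℓ m a d hb l ν i k) (beta ℓ m d hb i k (NumF ℓ m a d hb l ν i k)) (DenF ℓ m i k) (beta ℓ m d hb i k (DenF ℓ m i k))
        (Yspec_sub_gam_ne 0 i k _) (Yspec_sub_gam_ne 1 i k _)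
        (Yspec_sub_gam_shift_ne 0 i k) (Yspec_sub_gam_shift_ne 1 i k)
      linear_combination (2 * beta ℓ m d hb i k (beta ℓ m d hb i k (f))) * K
    · have hkk' : k' ≠ k := Ne.symm hkk
      rw [Ybeta_AC_ne i k k' hkk' 0, Ybeta_AC_ne i k k' hkk' 1,
        Ybeta_AC_ne i k' k hkk 0, Ybeta_AC_ne i k' k hkk 1]
      have hsk : ∀ t : Fin 2, AC ℓ m a d hb l ν i k (spec ℓ m t)
          = NumF ℓ m a d hb l ν i k / ((spec ℓ m t - gam ℓ m i k - cst ℓ m (I * hb * (d i : ℂ))) *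
              ((gam ℓ m i k - gam ℓ m i k') * (∏ p ∈ (univ.erase k).erase k', (gam ℓ m i k - gam ℓ m i p)))) := fun t => by
        rw [AC, YDenF_split i k k' hkk']
      have hsk' : ∀ t : Fin 2, AC ℓ m a d hb l ν i k' (spec ℓ m t)
          = NumF ℓ m a d hb l ν i k' / ((spec ℓ m t - gam ℓ m i k' - cst ℓ m (I * hb * (d i : ℂ))) *
              ((gam ℓ m i k' - gam ℓ m i k) * (∏ p ∈ (univ.erase k').erase k, (gam ℓ m i k' - gam ℓ m i p)))) := fun t => by
        rw [AC, YDenF_split i k' k hkk]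
      rw [hsk 0, hsk 1, hsk' 0, hsk' 1,
        show beta ℓ m d hb i k' (beta ℓ m d hb i k (f)) = beta ℓ m d hb i k (beta ℓ m d hb i k' (f)) from Ybeta_comm i k' k f]
      have K1 := Ybrkt (spec ℓ m 0) (spec ℓ m 1) (gam ℓ m i k) (gam ℓ m i k') (cst ℓ m (I * hb * (d i : ℂ)))
        (NumF ℓ m a d hb l ν i k) (NumF ℓ m a d hb l ν i k')
        ((gam ℓ m i k - gam ℓ m i k') * (∏ p ∈ (univ.erase k).erase k', (gam ℓ m i k - gam ℓ m i p)))
        ((gam ℓ m i k' - gam ℓ m i k - cst ℓ m (I * hb * (d i : ℂ))) * (∏ p ∈ (univ.erase k').erase k, (gam ℓ m i k' - gam ℓ m i p)))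
        (Yspec_sub_gam_ne 0 i k _) (Yspec_sub_gam_ne 1 i k _)
        (Yspec_sub_gam_ne 0 i k' _) (Yspec_sub_gam_ne 1 i k' _)
      have K2 := Ybrkt (spec ℓ m 0) (spec ℓ m 1) (gam ℓ m i k') (gam ℓ m i k) (cst ℓ m (I * hb * (d i : ℂ)))
        (NumF ℓ m a d hb l ν i k') (NumF ℓ m a d hb l ν i k)
        ((gam ℓ m i k' - gam ℓ m i k) * (∏ p ∈ (univ.erase k').erase k, (gam ℓ m i k' - gam ℓ m i p)))
        ((gam ℓ m i k - gam ℓ m i k' - cst ℓ m (I * hb * (d i : ℂ))) * (∏ p ∈ (univ.erase k).erase k', (gam ℓ m i k - gam ℓ m i p)))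
        (Yspec_sub_gam_ne 0 i k' _) (Yspec_sub_gam_ne 1 i k' _)
        (Yspec_sub_gam_ne 0 i k _) (Yspec_sub_gam_ne 1 i k _)
      have K3 := Ycancel (gam ℓ m i k) (gam ℓ m i k') (cst ℓ m (I * hb * (d i : ℂ)))
        (NumF ℓ m a d hb l ν i k) (NumF ℓ m a d hb l ν i k') ((∏ p ∈ (univ.erase k).erase k', (gam ℓ m i k - gam ℓ m i p))) ((∏ p ∈ (univ.erase k').erase k, (gam ℓ m i k' - gam ℓ m i p)))
        (Ygam_sub_gam_ne' i k k' hkk) (Ygam_sub_gam_ne' i k' k hkk')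
        (Ygam_sub_gam_ne i k k' hkk _) (Ygam_sub_gam_ne i k' k hkk' _)
        (YD2_ne_zero i k k') (YD2_ne_zero i k' k)
      linear_combination (beta ℓ m d hb i k (beta ℓ m d hb i k' (f))) * K1 + (beta ℓ m d hb i k (beta ℓ m d hb i k' (f))) * K2
        + (beta ℓ m d hb i k (beta ℓ m d hb i k' (f)) * (spec ℓ m 0 - spec ℓ m 1) ^ 2 *
            (1 / ((spec ℓ m 0 - gam ℓ m i k - cst ℓ m (I * hb * (d i : ℂ))) * ((spec ℓ m 1 - gam ℓ m i k - cst ℓ m (I * hb * (d i : ℂ))) *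
              ((spec ℓ m 0 - gam ℓ m i k' - cst ℓ m (I * hb * (d i : ℂ))) * (spec ℓ m 1 - gam ℓ m i k' - cst ℓ m (I * hb * (d i : ℂ)))))))) * K3
  have Hmain : (spec ℓ m 0 - spec ℓ m 1) * ((∑ k : Fin (m i), ∑ k' : Fin (m i), (AC ℓ m a d hb l ν i k (spec ℓ m 0) * beta ℓ m d hb i k (AC ℓ m a d hb l ν i k' (spec ℓ m 1))) * beta ℓ m d hb i k (beta ℓ m d hb i k' f)) - (∑ k : Fin (m i), ∑ k' : Fin (m i), (AC ℓ m a d hb l ν i k (spec ℓ m 1) * beta ℓ m d hb i k (AC ℓ m a d hb l ν i k' (spec ℓ m 0))) * beta ℓ m d hb i k (beta ℓ m d hb i k' f)))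
      - cst ℓ m (I * hb * (d i : ℂ)) * (((∑ k : Fin (m i), ∑ k' : Fin (m i), (AC ℓ m a d hb l ν i k (spec ℓ m 0) * beta ℓ m d hb i k (AC ℓ m a d hb l ν i k' (spec ℓ m 0))) * beta ℓ m d hb i k (beta ℓ m d hb i k' f)) - (∑ k : Fin (m i), ∑ k' : Fin (m i), (AC ℓ m a d hb l ν i k (spec ℓ m 0) * beta ℓ m d hb i k (AC ℓ m a d hb l ν i k' (spec ℓ m 1))) * beta ℓ m d hb i k (beta ℓ m d hb i k' f))) - ((∑ k : Fin (m i), ∑ k' : Fin (m i), (AC ℓ m a d hb l ν i k (spec ℓ m 1) * beta ℓ m d hb i k (AC ℓ m a d hb l ν i k' (spec ℓ m 0))) * beta ℓ m d hb i k (beta ℓ m d hb i k' f)) - (∑ k : Fin (m i), ∑ k' : Fin (m i), (AC ℓ m a d hb l ν i k (spec ℓ m 1) * beta ℓ m d hb i k (AC ℓ m a d hb l ν i k' (spec ℓ m 1))) * beta ℓ m d hb i k (beta ℓ m d hb i k' f)))) = 0 := by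
    have fold : (spec ℓ m 0 - spec ℓ m 1) * ((∑ k : Fin (m i), ∑ k' : Fin (m i), (AC ℓ m a d hb l ν i k (spec ℓ m 0) * beta ℓ m d hb i k (AC ℓ m a d hb l ν i k' (spec ℓ m 1))) * beta ℓ m d hb i k (beta ℓ m d hb i k' f)) - (∑ k : Fin (m i), ∑ k' : Fin (m i), (AC ℓ m a d hb l ν i k (spec ℓ m 1) * beta ℓ m d hb i k (AC ℓ m a d hb l ν i k' (spec ℓ m 0))) * beta ℓ m d hb i k (beta ℓ m d hb i k' f)))
        - cst ℓ m (I * hb * (d i : ℂ)) * (((∑ k : Fin (m i), ∑ k' : Fin (m i), (AC ℓ m a d hb l ν i k (spec ℓ m 0) * beta ℓ m d hb i k (AC ℓ m a d hb l ν i k' (spec ℓ m 0))) * beta ℓ m d hb i k (beta ℓ m d hb i k' f)) - (∑ k : Fin (m i), ∑ k' : Fin (m i), (AC ℓ m a d hb l ν i k (spec ℓ m 0) * beta ℓ m d hb i k (AC ℓ m a d hb l ν i k' (spec ℓ m 1))) * beta ℓ m d hb i k (beta ℓ m d hb i k' f))) - ((∑ k : Fin (m i), ∑ k' : Fin (m i),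 (AC ℓ m a d hb l ν i k (spec ℓ m 1) * beta ℓ m d hb i k (AC ℓ m a d hb l ν i k' (spec ℓ m 0))) * beta ℓ m d hb i k (beta ℓ m d hb i k' f)) - (∑ k : Fin (m i), ∑ k' : Fin (m i), (AC ℓ m a d hb l ν i k (spec ℓ m 1) * beta ℓ m d hb i k (AC ℓ m a d hb l ν i k' (spec ℓ m 1))) * beta ℓ m d hb i k (beta ℓ m d hb i k' f))))
      = ∑ k : Fin (m i), ∑ k' : Fin (m i),
        ((spec ℓ m 0 - spec ℓ m 1) * (AC ℓ m a d hb l ν i k (spec ℓ m 0) * beta ℓ m d hb i k (AC ℓ m a d hb l ν i k' (spec ℓ m 1)) - AC ℓ m a d hb l ν i k (spec ℓ m 1) * beta ℓ m d hb i k (AC ℓ m a d hb l ν i k' (spec ℓ m 0))) - cst ℓ m (I * hb * (d i : ℂ)) * ((AC ℓ m a d hb l ν i k (spec ℓ m 0) - AC ℓ m a d hb l ν i k (spec ℓ m 1)) * (beta ℓ m d hb i k (AC ℓ m a d hb l ν i k' (spec ℓ m 0)) - beta ℓ m d hb i k (AC ℓ m a d hb l ν i k' (spec ℓ m 1)))))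 * beta ℓ m d hb i k (beta ℓ m d hb i k' (f)) := by
      simp only [mul_sub, Finset.mul_sum, ← Finset.sum_sub_distrib]
      exact Finset.sum_congr rfl fun k _ => Finset.sum_congr rfl fun k' _ => by ring
    rw [fold]
    exact Ydouble_sum_eq_zero _ pair
  linear_combination (cst ℓ m (-((d i : ℂ) ^ (-(1/2 : ℂ)))) * cst ℓ m (-((d i : ℂ) ^ (-(1/2 : ℂ))))) * Hmain
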